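/- For a differential algebra (A,V), the following are equivalent: (1) V^+ = R, where R = Ann(Ann F) is the double annihilator of the module F of differential forms (i.e. the set of regular covectors); (2) the canonical map j : V → V^{+*} is surjective (hence an isomorphism). -/
import Mathlib


set_option synthInstance.maxHeartbeats 1000000
set_option maxHeartbeats 1000000

/-- A `k`-linear map `v : A → A` is a derivation if it satisfies the Leibniz rule. -/
def IsDerivLin {k A : Type*} [Field k] [Ring A] [Algebra k A]
    (v : A →ₗ[k] A) : Prop := ∀ a b : A, v (a * b) = v a * b + a * v b

section Setup
variable {k A : Type*} [Field k] [CharZero k] [Ring A] [Algebra k A]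
variable (V : Submodule (Subalgebra.center k A) (A →ₗ[k] A))

/-- The differential `dA a ∈ V⁺ = Hom_Z(V, A)`, `v ↦ v a`, where `Z` is the
center of `A` (which acts on `A →ₗ[k] A` by `(s • v) a = s * v a`). -/
def dA (a : A) : V →ₗ[Subalgebra.center k A] A where
  toFun v := (v : A →ₗ[k] A) a
  map_add' _ _ := rfl
  map_smul' _ _ := rfl

/-- Left action of `A` on covectors: `(a • ω)(v) = a * ω v`. -/
def lAct (a : A) (ω : V →ₗ[Subalgebra.center k A] A) :
    V →ₗ[Subalgebra.center k A] A where
  toFun v := a * ω v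
  map_add' u v := by simp [mul_add]
  map_smul' s v := by
    simp only [map_smul, RingHom.id_apply, Subalgebra.smul_def, smul_eq_mul]
    rw [← mul_assoc, Subalgebra.mem_center_iff.mp s.2 a, mul_assoc]

/-- Right action of `A` on covectors: `(ω • b)(v) = ω v * b`. -/
def rAct (b : A) (ω : V →ₗ[Subalgebra.center k A] A) :
    V →ₗ[Subalgebra.center k A] A where
  toFun v := ω v * b
  map_add' u v := by simp [add_mul]
  map_smul' s v := by
    simp only [map_smul, RingHom.id_apply, Subalgebra.smul_def, smul_eq_mul,
      mul_assoc]

/-- A function `w : V⁺ → A` is an `A`-bimodule homomorphism, i.e. an element of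
`V⁺* = Hom_{A,A}(V⁺, A)`. -/
def IsBilin (w : (V →ₗ[Subalgebra.center k A] A) → A) : Prop :=
  (∀ ω η, w (ω + η) = w ω + w η) ∧
  (∀ (a b : A) ω, w (lAct V a (rAct V b ω)) = a * w ω * b)

/-- Membership in the module `F ⊆ V⁺` of differential forms: the `A`-sub-bimodule
generated by the differentials, i.e. finite sums `Σᵢ ρᵢ · d aᵢ · qᵢ`. -/
def MemF (ω : V →ₗ[Subalgebra.center k A] A) : Prop :=
  ∃ (m : ℕ) (ρ a q : Fin m → A),
    ω = ∑ i, lAct V (ρ i) (rAct V (q i) (dA V (a i)))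

/-- Membership in the set `R` of regular covectors, the annihilator of
`N = Ann F ⊆ V⁺*`: `R = {ω ∈ V⁺ | ∀ n ∈ N, n ω = 0}`. -/
def MemR (ω : V →ₗ[Subalgebra.center k A] A) : Prop :=
  ∀ n, IsBilin V n → (∀ η, MemF V η → n η = 0) → n ω = 0

/-- `d a` lies in `F`. -/
lemma memF_dA (a : A) : MemF V (dA V a) := by
  refine ⟨1, fun _ => 1, fun _ => a, fun _ => 1, ?_⟩
  rw [Fin.sum_univ_one]
  ext u
  simp [lAct, rAct, dA]

/-- A bilinear functional sends `0` to `0`. -/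
lemma IsBilin.zero {w : (V →ₗ[Subalgebra.center k A] A) → A}
    (hw : IsBilin V w) : w 0 = 0 := by
  have h := hw.1 0 0
  rw [add_zero] at h
  exact (add_eq_left.mp h.symm)

end Setup

/-- For a differential algebra `(A, V)` the following are equivalent:
(1) `V⁺ = R`, where `R = Ann (Ann F)` is the double annihilator of the module
`F` of differential forms (the regular covectors); (2) the canonical map
`j : V → V⁺*` is surjective (hence an isomorphism). -/
theorem reflexive_iff_j_surjective {k A : Type*} [Field k] [CharZero k]
    [Ring A] [Algebra k A] (V : Submodule (Subalgebra.center k A) (A →ₗ[k] A))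
    (hV : ∀ v ∈ V, IsDerivLin v)
    (hVcc : ∀ v : A →ₗ[k] A, IsDerivLin v →
      (∀ a : A, (∀ u ∈ V, u a = 0) → v a = 0) → v ∈ V) :
    (∀ ω : V →ₗ[Subalgebra.center k A] A, MemR V ω) ↔
    (∀ w, IsBilin V w → ∃ v : V, ∀ ω, w ω = ω v) := by
  constructor
  · -- reflexivity ⇒ surjectivity of j
    intro hreg w hw
    -- define v₀ a := w (d a)
    have hdsmul : ∀ (c : k) (a : A),
        dA V (c • a) = lAct V (algebraMap k A c) (rAct V 1 (dA V a)) := by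
      intro c a
      ext u
      show (u : A →ₗ[k] A) (c • a) = algebraMap k A c * ((u : A →ₗ[k] A) a * 1)
      rw [map_smul, Algebra.smul_def, mul_one]
    have hdadd : ∀ a b : A, dA V (a + b) = dA V a + dA V b := by
      intro a b; ext u; simp [dA]
    set v₀ : A →ₗ[k] A :=
      { toFun := fun a => w (dA V a),
        map_add' := fun a b => by
          show w (dA V (a + b)) = w (dA V a) + w (dA V b)
          rw [hdadd a b, hw.1],
        map_smul' := fun c a => by
          show w (dA V (c • a)) = c • w (dA V a)
          rw [hdsmul c a, hw.2, mul_one, Algebra.smul_def] }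
      with hv₀
    have hv₀app : ∀ a : A, v₀ a = w (dA V a) := fun _ => rfl
    -- v₀ is a derivation
    have hderiv : IsDerivLin v₀ := by
      intro a b
      have hd : dA V (a * b) =
          lAct V 1 (rAct V b (dA V a)) + lAct V a (rAct V 1 (dA V b)) := by
        ext u
        have := hV u u.2 a b
        simp [dA, lAct, rAct, this]
      rw [hv₀app, hd, hw.1, hw.2, hw.2, one_mul, mul_one, hv₀app, hv₀app]
    -- v₀ vanishes where V vanishes
    have hzero : ∀ a : A, (∀ u ∈ V, u a = 0) → v₀ a = 0 := by
      intro a ha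
      have : dA V a = 0 := by
        ext u; exact ha u u.2
      rw [hv₀app, this, IsBilin.zero V hw]
    refine ⟨⟨v₀, hVcc v₀ hderiv hzero⟩, fun ω => ?_⟩
    -- the difference n := w - j v annihilates F, hence is 0
    set v : V := ⟨v₀, hVcc v₀ hderiv hzero⟩ with hv
    set n : (V →ₗ[Subalgebra.center k A] A) → A := fun η => w η - η v with hn
    have hnbil : IsBilin V n := by
      constructor
      · intro ω η
        simp only [hn, hw.1, LinearMap.add_apply]
        abel
      · intro a b ω
        show w (lAct V a (rAct V b ω)) - (lAct V a (rAct V b ω)) v =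
          a * (w ω - ω v) * b
        rw [hw.2]
        have h : (lAct V a (rAct V b ω)) v = a * (ω v * b) := rfl
        rw [h]
        noncomm_ring
    have hnF : ∀ η, MemF V η → n η = 0 := by
      intro η ⟨m, ρ, a, q, hη⟩
      -- package n as an AddMonoidHom to use map_sum
      let n' : (V →ₗ[Subalgebra.center k A] A) →+ A :=
        { toFun := n, map_zero' := IsBilin.zero V hnbil, map_add' := hnbil.1 }
      have : n η = ∑ i, n (lAct V (ρ i) (rAct V (q i) (dA V (a i)))) := by
        rw [hη]; exact map_sum n' _ _
      rw [this]
      apply Finset.sum_eq_zero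
      intro i _
      have hdz : n (dA V (a i)) = 0 := by
        simp only [hn]
        have : (dA V (a i)) v = v₀ (a i) := rfl
        rw [this, hv₀app, sub_self]
      rw [hnbil.2, hdz, mul_zero, zero_mul]
    have := hreg ω n hnbil hnF
    simp only [hn] at this
    exact sub_eq_zero.mp this
  · -- surjectivity of j ⇒ reflexivity
    intro hsurj ω n hn hnF
    obtain ⟨v, hv⟩ := hsurj n hn
    have hv0 : (v : A →ₗ[k] A) = 0 := by
      ext a
      have h1 : n (dA V a) = 0 := hnF _ (memF_dA V a)
      have h2 : n (dA V a) = (v : A →ₗ[k] A) a := hv (dA V a)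
      simp [← h2, h1]
    have : v = 0 := Subtype.ext hv0
    rw [hv ω, this, map_zero]
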